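/- For all integers n ≥ 3 and 1 ≤ i ≤ n−2, the function ρ_{n,i} satisfies the Legendre-type differential equation (1−t²)·ρ_{n,i}''(t) − n·t·ρ_{n,i}'(t) − i(n−i−1)·ρ_{n,i}(t) = 0 for all t ∈ (−1,1). -/

import Mathlib

open Real Set Filter Topology

/-- coefficient of the hypergeometric series -/
noncomputable def hcoef (a b c : ℝ) (k : ℕ) : ℝ :=
  (ascPochhammer ℝ k).eval a * (ascPochhammer ℝ k).eval b /
      ((ascPochhammer ℝ k).eval c * (Nat.factorial k))

lemma hcoef_succ {a b c : ℝ} (hc : 0 < c) (k : ℕ) :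
    hcoef a b c (k+1) * ((c + k) * ((k:ℝ)+1)) = hcoef a b c k * ((a+k)*(b+k)) := by
  have hck : 0 < (ascPochhammer ℝ k).eval c := ascPochhammer_pos k c hc
  have hfk : (0:ℝ) < (Nat.factorial k : ℝ) := by exact_mod_cast Nat.factorial_pos k
  have hck' : 0 < c + k := by positivity
  simp only [hcoef, ascPochhammer_succ_right, Polynomial.eval_mul, Polynomial.eval_add,
    Polynomial.eval_X, Polynomial.eval_natCast, Nat.factorial_succ, Nat.cast_mul, Nat.cast_add,
    Nat.cast_one]
  field_simp

lemma hcoef_bound {a b c : ℝ} (hc : 0 < c) (hab : a + b = 1) :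
    ∃ M : ℝ, 0 ≤ M ∧ ∀ k, |hcoef a b c k| ≤ M := by
  obtain ⟨K, hK⟩ := exists_nat_ge (max (max |a| |b|) (a*b/c))
  have hKa : |a| ≤ K := le_trans (le_max_left _ _ |>.trans (le_max_left _ _)) hK
  have hKb : |b| ≤ K := le_trans (le_max_right _ _ |>.trans (le_max_left _ _)) hK
  have hKab : a*b/c ≤ K := le_trans (le_max_right _ _) hK
  have key : ∀ k : ℕ, K ≤ k → |hcoef a b c (k+1)| ≤ |hcoef a b c k| := by
    intro k hk
    have hkR : (K:ℝ) ≤ k := by exact_mod_cast hk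
    have hak : 0 ≤ a + k := by have := neg_abs_le a; linarith
    have hbk : 0 ≤ b + k := by have := neg_abs_le b; linarith
    have hck : 0 < (c + k) * ((k:ℝ)+1) := by positivity
    have hrec := hcoef_succ (a := a) (b := b) hc k
    have h1 : |hcoef a b c (k+1)| * ((c + k) * ((k:ℝ)+1))
        = |hcoef a b c k| * ((a+k)*(b+k)) := by
      have := congrArg abs hrec
      rwa [abs_mul, abs_of_pos hck, abs_mul, abs_of_nonneg (mul_nonneg hak hbk)] at this
    have habk : a*b ≤ c * k := by
      have h3 : a*b/c ≤ (k:ℝ) := le_trans hKab hkR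
      calc a*b = (a*b/c) * c := by field_simp
      _ ≤ (k:ℝ) * c := by gcongr
      _ = c * k := mul_comm _ _
    have h2 : (a+k)*(b+k) ≤ (c + k) * ((k:ℝ)+1) := by
      have e1 : (a+k)*(b+k) = a*b + k + (k:ℝ)^2 := by linear_combination (k:ℝ) * hab
      have e2 : (c+k)*((k:ℝ)+1) = (k:ℝ)^2 + c*k + k + c := by ring
      rw [e1, e2]; linarith
    have := mul_le_mul_of_nonneg_left h2 (abs_nonneg (hcoef a b c k))
    rw [← h1] at this
    exact le_of_mul_le_mul_right this hck
  refine ⟨∑ j ∈ Finset.range (K+1), |hcoef a b c j|,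
    Finset.sum_nonneg fun j _ => abs_nonneg _, ?_⟩
  have hKM : ∀ j ≤ K, |hcoef a b c j| ≤ ∑ j ∈ Finset.range (K+1), |hcoef a b c j| := by
    intro j hj
    exact Finset.single_le_sum (f := fun j => |hcoef a b c j|)
      (fun _ _ => abs_nonneg _) (Finset.mem_range.2 (Nat.lt_succ_of_le hj))
  have mono : ∀ m, |hcoef a b c (K+m)| ≤ |hcoef a b c K| := by
    intro m
    induction m with
    | zero => exact le_refl _
    | succ m ih => exact le_trans (key (K+m) (Nat.le_add_right _ _)) ih
  intro k
  rcases le_or_gt k K with h | h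
  · exact hKM k h
  · have : k = K + (k - K) := by omega
    rw [this]
    exact le_trans (mono (k - K)) (hKM K le_rfl)

lemma summable_geom_aux (p : ℕ) {r : ℝ} (hr0 : 0 ≤ r) (hr1 : r < 1) :
    Summable (fun k : ℕ => ((k:ℝ)+1)^p * r^k) := by
  have hr : ‖r‖ < 1 := by rwa [Real.norm_eq_abs, abs_of_nonneg hr0]
  have h1 : Summable (fun k : ℕ => (2:ℝ)^p * ((k:ℝ)^p * r^k) + (2:ℝ)^p * r^k) :=
    ((summable_pow_mul_geometric_of_norm_lt_one p hr).mul_left _).add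
      ((summable_geometric_of_lt_one hr0 hr1).mul_left _)
  refine Summable.of_nonneg_of_le (fun k => by positivity) (fun k => ?_) h1
  have hb : ((k:ℝ)+1)^p ≤ (2:ℝ)^p * ((k:ℝ)^p + 1) := by
    rcases Nat.eq_zero_or_pos k with hk | hk
    · subst hk
      have h1 : (1:ℝ)^p ≤ (2:ℝ)^p := pow_le_pow_left₀ (by norm_num) (by norm_num) p
      have h2 : (0:ℝ) ≤ (0:ℝ)^p := by positivity
      simp only [Nat.cast_zero, zero_add, one_pow] at h1 ⊢
      nlinarith
    · have h2 : ((k:ℝ)+1) ≤ 2*(k:ℝ) := by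
        have : (1:ℝ) ≤ k := by exact_mod_cast hk
        linarith
      calc ((k:ℝ)+1)^p ≤ (2*(k:ℝ))^p := by gcongr
      _ = (2:ℝ)^p * (k:ℝ)^p := mul_pow _ _ _
      _ ≤ (2:ℝ)^p * ((k:ℝ)^p + 1) := by nlinarith [pow_pos (by norm_num : (0:ℝ) < 2) p]
  calc ((k:ℝ)+1)^p * r^k ≤ ((2:ℝ)^p * ((k:ℝ)^p + 1)) * r^k :=
        mul_le_mul_of_nonneg_right hb (by positivity)
  _ = (2:ℝ)^p * ((k:ℝ)^p * r^k) + (2:ℝ)^p * r^k := by ring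

lemma summable_aux (d : ℕ → ℝ) (M : ℝ) (p : ℕ) (hd : ∀ k, |d k| ≤ M * ((k:ℝ)+1)^p)
    {x : ℝ} (hx : |x| < 1) : Summable (fun k => d k * x ^ k) := by
  have h1 : Summable (fun k : ℕ => M * (((k:ℝ)+1)^p * |x|^k)) :=
    (summable_geom_aux p (abs_nonneg x) hx).mul_left M
  refine Summable.of_norm (Summable.of_nonneg_of_le (fun k => norm_nonneg _) (fun k => ?_) h1)
  rw [Real.norm_eq_abs, abs_mul, abs_pow]
  calc |d k| * |x|^k ≤ (M * ((k:ℝ)+1)^p) * |x|^k :=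
        mul_le_mul_of_nonneg_right (hd k) (by positivity)
  _ = M * (((k:ℝ)+1)^p * |x|^k) := by ring

lemma hasDerivAt_psum (d : ℕ → ℝ) (M : ℝ) (hd : ∀ k, |d k| ≤ M * ((k:ℝ)+1))
    {x : ℝ} (hx : |x| < 1) :
    HasDerivAt (fun y => ∑' k, d k * y ^ k) (∑' k : ℕ, ((k:ℝ)+1) * d (k+1) * x ^ k) x := by
  have hM : 0 ≤ M := by
    have h := (abs_nonneg (d 0)).trans (hd 0)
    norm_num at h
    exact h
  set r : ℝ := (|x| + 1) / 2 with hr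
  have hr0 : 0 ≤ r := by positivity
  have hr1 : r < 1 := by simp only [hr]; linarith
  have hxr : |x| < r := by simp only [hr]; linarith
  have hrpos : 0 < r := by
    have := abs_nonneg x
    simp only [hr]; linarith
  have hxmem : x ∈ Ioo (-r) r := ⟨(abs_lt.1 hxr).1, (abs_lt.1 hxr).2⟩
  -- the bound sequence
  set u : ℕ → ℝ := fun k => M * ((k:ℝ)+1) * ((k:ℝ) * r ^ (k-1)) with hu
  have husum : Summable u := by
    rw [← summable_nat_add_iff 1]
    have : ∀ k : ℕ, u (k+1) = (M * ((k:ℝ)+2) * ((k:ℝ)+1)) * r ^ k := by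
      intro k
      simp only [hu]
      push_cast
      ring_nf
    rw [funext this]
    apply summable_aux _ (2*M) 2 _ (by rwa [abs_of_nonneg hr0])
    intro k
    have h1 : (0:ℝ) ≤ ((k:ℝ)+1) := by positivity
    rw [abs_of_nonneg (by positivity)]
    nlinarith [mul_nonneg (mul_nonneg hM h1) (show (0:ℝ) ≤ (k:ℝ) from Nat.cast_nonneg k)]
  have hder : ∀ k : ℕ, ∀ y : ℝ, y ∈ Ioo (-r) r →
      HasDerivAt (fun z => d k * z ^ k) (d k * ((k:ℝ) * y ^ (k-1))) y :=
    fun k y _ => (hasDerivAt_pow k y).const_mul (d k)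
  have hbound : ∀ k : ℕ, ∀ y : ℝ, y ∈ Ioo (-r) r → ‖d k * ((k:ℝ) * y ^ (k-1))‖ ≤ u k := by
    intro k y hy
    have hyr : |y| ≤ r := le_of_lt (abs_lt.2 ⟨hy.1, hy.2⟩)
    rw [Real.norm_eq_abs, abs_mul, abs_mul, Nat.abs_cast, abs_pow]
    calc |d k| * ((k:ℝ) * |y| ^ (k-1)) ≤ (M * ((k:ℝ)+1)) * ((k:ℝ) * r ^ (k-1)) :=
          mul_le_mul (hd k) (mul_le_mul_of_nonneg_left
            (pow_le_pow_left₀ (abs_nonneg y) hyr _) (Nat.cast_nonneg k))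
            (by positivity) (by positivity)
    _ = u k := by simp only [hu]
  have h0 : Summable fun k => d k * (0:ℝ) ^ k := by
    apply summable_of_ne_finset_zero (s := {0})
    intro k hk
    have : k ≠ 0 := by simpa using hk
    simp [zero_pow this]
  have key := hasDerivAt_tsum_of_isPreconnected husum isOpen_Ioo
    (convex_Ioo (-r) r).isPreconnected hder hbound
    (show (0:ℝ) ∈ Ioo (-r) r from ⟨by linarith, hrpos⟩)
    h0 hxmem
  have hsum' : Summable (fun k => d k * ((k:ℝ) * x ^ (k-1))) := by
    apply Summable.of_norm
    exact Summable.of_nonneg_of_le (fun k => norm_nonneg _)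
      (fun k => hbound k x hxmem) husum
  have heq : (∑' k, d k * ((k:ℝ) * x ^ (k-1))) = ∑' k : ℕ, ((k:ℝ)+1) * d (k+1) * x ^ k := by
    rw [Summable.tsum_eq_zero_add hsum']
    have h00 : d 0 * (((0:ℕ):ℝ) * x ^ (0-1 : ℕ)) = 0 := by norm_num
    rw [h00, zero_add]
    refine tsum_congr fun k => ?_
    have hks : k + 1 - 1 = k := rfl
    rw [hks]
    push_cast
    ring
  rw [← heq]
  exact key

/-- The Gauss hypergeometric function `₂F₁(a,b;c;x)`. -/
noncomputable def gaussHyp (a b c x : ℝ) : ℝ :=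
  ∑' k : ℕ, ((ascPochhammer ℝ k).eval a * (ascPochhammer ℝ k).eval b /
      ((ascPochhammer ℝ k).eval c * (Nat.factorial k))) * x ^ k

/-- The function `ρ_{n,i}` on `(-1,1)`. -/
noncomputable def rho (n i : ℕ) (t : ℝ) : ℝ :=
  (Real.Gamma i * Real.Gamma ((n : ℝ) - i - 1) /
      (4 * (2 * π) ^ (((n : ℝ) - 2) / 2) * Real.Gamma ((n : ℝ) / 2))) *
    (1 - t) ^ (-(((n : ℝ) - 2) / 2)) *
    gaussHyp ((n : ℝ) / 2 - i) ((i : ℝ) + 1 - (n : ℝ) / 2) ((n : ℝ) / 2) ((1 + t) / 2)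

noncomputable def G1fun (a b c y : ℝ) : ℝ :=
  ∑' k : ℕ, ((k:ℝ)+1) * hcoef a b c (k+1) * y ^ k

noncomputable def G2fun (a b c y : ℝ) : ℝ :=
  ∑' k : ℕ, ((k:ℝ)+1) * (((k:ℝ)+2) * hcoef a b c (k+2)) * y ^ k

lemma gaussHyp_def (a b c y : ℝ) :
    gaussHyp a b c y = ∑' k : ℕ, hcoef a b c k * y ^ k := rfl

lemma G1fun_def (a b c y : ℝ) :
    G1fun a b c y = ∑' k : ℕ, ((k:ℝ)+1) * hcoef a b c (k+1) * y ^ k := rfl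

lemma G2fun_def (a b c y : ℝ) :
    G2fun a b c y = ∑' k : ℕ, ((k:ℝ)+1) * (((k:ℝ)+2) * hcoef a b c (k+2)) * y ^ k := rfl

lemma hasDerivAt_gaussHyp {a b c : ℝ} (hc : 0 < c) (hab : a + b = 1) {x : ℝ} (hx : |x| < 1) :
    HasDerivAt (gaussHyp a b c) (G1fun a b c x) x := by
  obtain ⟨M, hM0, hM⟩ := hcoef_bound hc hab
  have hbd : ∀ k : ℕ, |hcoef a b c k| ≤ M * ((k:ℝ)+1) := by
    intro k
    refine (hM k).trans ?_
    have h1 : (0:ℝ) ≤ (k:ℝ) := Nat.cast_nonneg k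
    nlinarith
  exact hasDerivAt_psum (fun k => hcoef a b c k) M hbd hx

lemma hasDerivAt_G1fun {a b c : ℝ} (hc : 0 < c) (hab : a + b = 1) {x : ℝ} (hx : |x| < 1) :
    HasDerivAt (G1fun a b c) (G2fun a b c x) x := by
  obtain ⟨M, hM0, hM⟩ := hcoef_bound hc hab
  have hbd : ∀ k : ℕ, |((k:ℝ)+1) * hcoef a b c (k+1)| ≤ M * ((k:ℝ)+1) := by
    intro k
    rw [abs_mul, abs_of_nonneg (show (0:ℝ) ≤ (k:ℝ)+1 by positivity)]
    calc ((k:ℝ)+1) * |hcoef a b c (k+1)| ≤ ((k:ℝ)+1) * M :=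
          mul_le_mul_of_nonneg_left (hM _) (by positivity)
    _ = M * ((k:ℝ)+1) := mul_comm _ _
  have h := hasDerivAt_psum (fun k => ((k:ℝ)+1) * hcoef a b c (k+1)) M hbd hx
  have he : (∑' k : ℕ, ((k:ℝ)+1) * ((((k+1:ℕ):ℝ)+1) * hcoef a b c (k+1+1)) * x ^ k)
      = G2fun a b c x := by
    rw [G2fun_def]
    refine tsum_congr fun k => ?_
    have e : k+1+1 = k+2 := rfl
    rw [e]
    push_cast
    ring
  rw [← he]
  exact h

lemma tsum_shift1 {f : ℕ → ℝ} (hf : Summable f) (h0 : f 0 = 0) :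
    ∑' k : ℕ, f (k+1) = ∑' k : ℕ, f k := by
  rw [Summable.tsum_eq_zero_add hf, h0, zero_add]

lemma tsum_shift2 {f : ℕ → ℝ} (hf : Summable f) (h0 : f 0 = 0) (h1 : f 1 = 0) :
    ∑' k : ℕ, f (k+1+1) = ∑' k : ℕ, f k := by
  have hshift : Summable (fun n : ℕ => f (n+1)) := (summable_nat_add_iff 1).2 hf
  rw [Summable.tsum_eq_zero_add hf, h0, zero_add, Summable.tsum_eq_zero_add hshift,
    show (0+1 : ℕ) = 1 from rfl, h1, zero_add]

lemma abs_mul3_le {X Y Z P Q R : ℝ} (hX : |X| ≤ P) (hY : |Y| ≤ Q) (hZ : |Z| ≤ R) :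
    |X * (Y * Z)| ≤ P * (Q * R) := by
  rw [abs_mul, abs_mul]
  exact mul_le_mul hX (mul_le_mul hY hZ (abs_nonneg _) ((abs_nonneg _).trans hY))
    (mul_nonneg (abs_nonneg _) (abs_nonneg _)) ((abs_nonneg _).trans hX)

lemma hyp_ode {a b c : ℝ} (hc : 0 < c) (hab : a + b = 1) {x : ℝ} (hx : |x| < 1) :
    x * (1-x) * G2fun a b c x + (c - 2*x) * G1fun a b c x - a*b*gaussHyp a b c x = 0 := by
  obtain ⟨M, hM0, hM⟩ := hcoef_bound hc hab
  have hknn : ∀ k : ℕ, (0:ℝ) ≤ (k:ℝ) := fun k => Nat.cast_nonneg k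
  have habs1 : ∀ k : ℕ, |(k:ℝ)| ≤ (k:ℝ)+1 := by
    intro k; rw [abs_of_nonneg (hknn k)]; linarith
  have habs2 : ∀ k : ℕ, |(k:ℝ)-1| ≤ (k:ℝ)+1 := by
    intro k
    rw [abs_le]; constructor <;> [linarith [hknn k]; linarith [hknn k]]
  have habs3 : ∀ k : ℕ, |(k:ℝ)+1| ≤ (k:ℝ)+1 := by
    intro k; rw [abs_of_nonneg (by positivity)]
  have habs4 : ∀ k : ℕ, |(k:ℝ)+2| ≤ 2*((k:ℝ)+1) := by
    intro k; rw [abs_of_nonneg (by positivity)]; linarith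
  -- summability of all the involved series
  have S0 : Summable (fun k : ℕ => hcoef a b c k * x^k) := by
    apply summable_aux _ M 0 _ hx
    intro k; rw [pow_zero, mul_one]; exact hM k
  have S1 : Summable (fun k : ℕ => ((k:ℝ)+1) * hcoef a b c (k+1) * x^k) := by
    apply summable_aux (fun k => ((k:ℝ)+1) * hcoef a b c (k+1)) M 1 _ hx
    intro k
    rw [pow_one, abs_mul]
    exact mul_le_mul (habs3 k) (hM _) (abs_nonneg _) (by positivity) |>.trans
      (le_of_eq (mul_comm _ _))
  have S2 : Summable (fun k : ℕ => ((k:ℝ)+1) * (((k:ℝ)+2) * hcoef a b c (k+2)) * x^k) := by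
    apply summable_aux (fun k => ((k:ℝ)+1) * (((k:ℝ)+2) * hcoef a b c (k+2))) (2*M) 2 _ hx
    intro k
    calc |((k:ℝ)+1) * (((k:ℝ)+2) * hcoef a b c (k+2))|
        ≤ ((k:ℝ)+1) * ((2*((k:ℝ)+1)) * M) := abs_mul3_le (habs3 k) (habs4 k) (hM _)
    _ = 2*M * ((k:ℝ)+1)^2 := by ring
  have SA : Summable (fun k : ℕ => (k:ℝ) * (((k:ℝ)+1) * hcoef a b c (k+1)) * x^k) := by
    apply summable_aux (fun k => (k:ℝ) * (((k:ℝ)+1) * hcoef a b c (k+1))) M 2 _ hx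
    intro k
    calc |(k:ℝ) * (((k:ℝ)+1) * hcoef a b c (k+1))|
        ≤ ((k:ℝ)+1) * (((k:ℝ)+1) * M) := abs_mul3_le (habs1 k) (habs3 k) (hM _)
    _ = M * ((k:ℝ)+1)^2 := by ring
  have SB : Summable (fun k : ℕ => ((k:ℝ)-1) * ((k:ℝ) * hcoef a b c k) * x^k) := by
    apply summable_aux (fun k => ((k:ℝ)-1) * ((k:ℝ) * hcoef a b c k)) M 2 _ hx
    intro k
    calc |((k:ℝ)-1) * ((k:ℝ) * hcoef a b c k)|
        ≤ ((k:ℝ)+1) * (((k:ℝ)+1) * M) := abs_mul3_le (habs2 k) (habs1 k) (hM _)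
    _ = M * ((k:ℝ)+1)^2 := by ring
  have SC : Summable (fun k : ℕ => (k:ℝ) * hcoef a b c k * x^k) := by
    apply summable_aux (fun k => (k:ℝ) * hcoef a b c k) M 1 _ hx
    intro k
    rw [pow_one, abs_mul]
    exact mul_le_mul (habs1 k) (hM _) (abs_nonneg _) (by positivity) |>.trans
      (le_of_eq (mul_comm _ _))
  -- the three shifting claims
  have claim1 : x * G1fun a b c x = ∑' k : ℕ, (k:ℝ) * hcoef a b c k * x^k := by
    rw [G1fun_def, ← tsum_mul_left,
      ← tsum_shift1 SC (by norm_num)]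
    exact tsum_congr fun k => by push_cast; ring
  have claim2 : x * G2fun a b c x
      = ∑' k : ℕ, (k:ℝ) * (((k:ℝ)+1) * hcoef a b c (k+1)) * x^k := by
    rw [G2fun_def, ← tsum_mul_left,
      ← tsum_shift1 SA (by norm_num)]
    refine tsum_congr fun k => ?_
    have e : k+1+1 = k+2 := rfl
    rw [e]
    push_cast
    ring
  have claim3 : x^2 * G2fun a b c x
      = ∑' k : ℕ, ((k:ℝ)-1) * ((k:ℝ) * hcoef a b c k) * x^k := by
    rw [G2fun_def, ← tsum_mul_left,
      ← tsum_shift2 SB (by norm_num) (by norm_num)]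
    refine tsum_congr fun k => ?_
    have e : k+1+1 = k+2 := rfl
    rw [e]
    push_cast
    ring
  have decomp : x * (1-x) * G2fun a b c x + (c - 2*x) * G1fun a b c x - a*b*gaussHyp a b c x
      = (x * G2fun a b c x - x^2 * G2fun a b c x)
        + (c * G1fun a b c x - 2 * (x * G1fun a b c x)) - a*b*gaussHyp a b c x := by
    ring
  rw [decomp, claim2, claim3, claim1, G1fun_def, gaussHyp_def,
    ← tsum_mul_left (a := c), ← tsum_mul_left (a := 2), ← tsum_mul_left (a := a*b),
    ← Summable.tsum_sub SA SB, ← Summable.tsum_sub (S1.mul_left c) (SC.mul_left 2),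
    ← Summable.tsum_add (SA.sub SB) ((S1.mul_left c).sub (SC.mul_left 2)),
    ← Summable.tsum_sub ((SA.sub SB).add ((S1.mul_left c).sub (SC.mul_left 2))) (S0.mul_left (a*b))]
  have final : ∀ k : ℕ,
      ((k:ℝ) * (((k:ℝ)+1) * hcoef a b c (k+1)) * x^k
        - ((k:ℝ)-1) * ((k:ℝ) * hcoef a b c k) * x^k)
      + (c * (((k:ℝ)+1) * hcoef a b c (k+1) * x^k) - 2 * ((k:ℝ) * hcoef a b c k * x^k))
      - a*b*(hcoef a b c k * x^k) = 0 := by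
    intro k
    have R := hcoef_succ (a := a) (b := b) hc k
    linear_combination x^k * R + (hcoef a b c k * x^k * (k:ℝ)) * hab
  exact (tsum_congr final).trans tsum_zero

noncomputable def R1fun (C a b c u : ℝ) : ℝ :=
  C * ((c-1) * (1-u) ^ (-(c-1)-1) * gaussHyp a b c ((1+u)/2)
      + (1-u) ^ (-(c-1)) * (G1fun a b c ((1+u)/2) * (1/2)))

lemma hasDerivAt_F {C a b c : ℝ} (hc : 0 < c) (hab : a + b = 1) {u : ℝ}
    (h1 : -1 < u) (h2 : u < 1) :
    HasDerivAt (fun y => C * ((1-y) ^ (-(c-1)) * gaussHyp a b c ((1+y)/2)))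
      (R1fun C a b c u) u := by
  have h1u : (0:ℝ) < 1 - u := by linarith
  have hx : |(1+u)/2| < 1 := by rw [abs_lt]; constructor <;> linarith
  have hinner : HasDerivAt (fun y : ℝ => (1+y)/2) (1/2) u := by
    have := ((hasDerivAt_id u).const_add (1:ℝ)).div_const (2:ℝ)
    simpa using this
  have hgc : HasDerivAt (fun y => gaussHyp a b c ((1+y)/2))
      (G1fun a b c ((1+u)/2) * (1/2)) u :=
    HasDerivAt.comp u (hasDerivAt_gaussHyp hc hab hx) hinner
  have hw0raw : HasDerivAt (fun y : ℝ => (1-y) ^ (-(c-1)))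
      ((-(c-1) * (1-u) ^ (-(c-1)-1)) * (-1)) u := by
    have hin : HasDerivAt (fun y : ℝ => 1 - y) (-1) u := (hasDerivAt_id u).const_sub 1
    exact HasDerivAt.comp u (Real.hasDerivAt_rpow_const (Or.inl h1u.ne')) hin
  have hw0 : HasDerivAt (fun y : ℝ => (1-y) ^ (-(c-1)))
      ((c-1) * (1-u) ^ (-(c-1)-1)) u := by
    convert hw0raw using 1; ring
  exact (hw0.mul hgc).const_mul C

theorem aux_ode (C a b c : ℝ) (hc : 0 < c) (hab : a + b = 1)
    (t : ℝ) (ht1 : -1 < t) (ht2 : t < 1) :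
    (1 - t^2) * iteratedDeriv 2 (fun u => C * ((1-u) ^ (-(c-1)) * gaussHyp a b c ((1+u)/2))) t
      - (2*c) * t * deriv (fun u => C * ((1-u) ^ (-(c-1)) * gaussHyp a b c ((1+u)/2))) t
      - ((c-a) * (c+a-1)) * (C * ((1-t) ^ (-(c-1)) * gaussHyp a b c ((1+t)/2))) = 0 := by
  have h1u : (0:ℝ) < 1 - t := by linarith
  have hx : |(1+t)/2| < 1 := by rw [abs_lt]; constructor <;> linarith
  have hd1 : deriv (fun u => C * ((1-u) ^ (-(c-1)) * gaussHyp a b c ((1+u)/2))) t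
      = R1fun C a b c t := (hasDerivAt_F hc hab ht1 ht2).deriv
  have heq : deriv (fun u => C * ((1-u) ^ (-(c-1)) * gaussHyp a b c ((1+u)/2)))
      =ᶠ[𝓝 t] R1fun C a b c := by
    filter_upwards [Ioo_mem_nhds ht1 ht2] with y hy
    exact (hasDerivAt_F hc hab hy.1 hy.2).deriv
  -- second derivative pieces
  have hinner : HasDerivAt (fun y : ℝ => (1+y)/2) (1/2) t := by
    have := ((hasDerivAt_id t).const_add (1:ℝ)).div_const (2:ℝ)
    simpa using this
  have hgc : HasDerivAt (fun y => gaussHyp a b c ((1+y)/2))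
      (G1fun a b c ((1+t)/2) * (1/2)) t :=
    HasDerivAt.comp t (hasDerivAt_gaussHyp hc hab hx) hinner
  have hG1c : HasDerivAt (fun y => G1fun a b c ((1+y)/2))
      (G2fun a b c ((1+t)/2) * (1/2)) t :=
    HasDerivAt.comp t (hasDerivAt_G1fun hc hab hx) hinner
  have hw0raw : HasDerivAt (fun y : ℝ => (1-y) ^ (-(c-1)))
      ((-(c-1) * (1-t) ^ (-(c-1)-1)) * (-1)) t :=
    HasDerivAt.comp t (Real.hasDerivAt_rpow_const (Or.inl h1u.ne'))
      ((hasDerivAt_id t).const_sub 1)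
  have hw0 : HasDerivAt (fun y : ℝ => (1-y) ^ (-(c-1)))
      ((c-1) * (1-t) ^ (-(c-1)-1)) t := by
    convert hw0raw using 1; ring
  have hw1raw : HasDerivAt (fun y : ℝ => (1-y) ^ (-(c-1)-1))
      (((-(c-1)-1) * (1-t) ^ (-(c-1)-1-1)) * (-1)) t :=
    HasDerivAt.comp t (Real.hasDerivAt_rpow_const (Or.inl h1u.ne'))
      ((hasDerivAt_id t).const_sub 1)
  have hw1 : HasDerivAt (fun y : ℝ => (1-y) ^ (-(c-1)-1))
      (c * (1-t) ^ (-(c-1)-2)) t := by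
    convert hw1raw using 1
    rw [show (-(c-1)-1-1 : ℝ) = -(c-1)-2 by ring]
    ring
  have hder2 := (((hw1.const_mul (c-1)).mul hgc).add
    (hw0.mul (hG1c.mul_const (1/2)))).const_mul C
  have hd2 : iteratedDeriv 2 (fun u => C * ((1-u) ^ (-(c-1)) * gaussHyp a b c ((1+u)/2))) t
      = C * ((((c-1) * (c * (1-t) ^ (-(c-1)-2))) * gaussHyp a b c ((1+t)/2)
          + ((c-1) * (1-t) ^ (-(c-1)-1)) * (G1fun a b c ((1+t)/2) * (1/2)))
        + (((c-1) * (1-t) ^ (-(c-1)-1)) * (G1fun a b c ((1+t)/2) * (1/2))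
          + (1-t) ^ (-(c-1)) * ((G2fun a b c ((1+t)/2) * (1/2)) * (1/2)))) := by
    rw [iteratedDeriv_succ, iteratedDeriv_one, heq.deriv_eq]
    exact HasDerivAt.deriv (show HasDerivAt (R1fun C a b c) _ t from hder2)
  rw [hd1, hd2]
  simp only [R1fun]
  have hode := hyp_ode hc hab hx
  have hP1 : (1-t) ^ (-(c-1)-1) = (1-t) ^ (-(c-1)-2) * (1-t) := by
    rw [show (-(c-1)-1 : ℝ) = (-(c-1)-2) + 1 by ring, Real.rpow_add h1u, Real.rpow_one]
  have hP0 : (1-t) ^ (-(c-1)) = (1-t) ^ (-(c-1)-2) * ((1-t)*(1-t)) := by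
    rw [show (-(c-1) : ℝ) = (-(c-1)-2) + 1 + 1 by ring, Real.rpow_add h1u,
      Real.rpow_add h1u, Real.rpow_one]
    ring
  rw [hP1, hP0]
  linear_combination (C * ((1-t) ^ (-(c-1)-2)) * ((1-t)*(1-t))) * hode
    + (C * ((1-t) ^ (-(c-1)-2)) * ((1-t)*(1-t)) * gaussHyp a b c ((1+t)/2) * a) * hab

/-- The Legendre type differential equation satisfied by `ρ_{n,i}`. -/
theorem stmt_13 (n i : ℕ) (hn : 3 ≤ n) (hi1 : 1 ≤ i) (hi2 : i ≤ n - 2)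
    (t : ℝ) (ht : t ∈ Set.Ioo (-1 : ℝ) 1) :
    (1 - t ^ 2) * iteratedDeriv 2 (rho n i) t - (n : ℝ) * t * deriv (rho n i) t
      - (i : ℝ) * ((n : ℝ) - i - 1) * rho n i t = 0 := by
  have hn3 : (3:ℝ) ≤ (n:ℝ) := by exact_mod_cast hn
  have hc : 0 < (n:ℝ)/2 := by linarith
  have hab : ((n:ℝ)/2 - i) + ((i:ℝ) + 1 - (n:ℝ)/2) = 1 := by ring
  have key := aux_ode
    (Real.Gamma i * Real.Gamma ((n : ℝ) - i - 1) /
      (4 * (2 * π) ^ (((n : ℝ) - 2) / 2) * Real.Gamma ((n : ℝ) / 2)))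
    ((n:ℝ)/2 - i) ((i:ℝ) + 1 - (n:ℝ)/2) ((n:ℝ)/2) hc hab t ht.1 ht.2
  have hrw : rho n i = fun u =>
      (Real.Gamma i * Real.Gamma ((n : ℝ) - i - 1) /
        (4 * (2 * π) ^ (((n : ℝ) - 2) / 2) * Real.Gamma ((n : ℝ) / 2))) *
      ((1-u) ^ (-((n:ℝ)/2-1)) *
        gaussHyp ((n:ℝ)/2 - i) ((i:ℝ) + 1 - (n:ℝ)/2) ((n:ℝ)/2) ((1+u)/2)) := by
    funext u
    rw [rho, show (-(((n:ℝ)-2)/2)) = -((n:ℝ)/2-1) from by ring]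
    ring
  simp only [hrw]
  linear_combination key
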